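/- arXiv:2105.01555 — 7 statements merged into one kernel-verified Lean document; each statement's English description precedes it below -/
import Mathlib

section
/- Let N ∈ ℕ and let M be a complex matrix indexed by pairs of words in [N]^* such that for each k ∈ ℕ the finite submatrix (M_{α,β})_{α,β ∈ [N]^{≤k}} is positive semidefinite. Then there exist a sequence of finite-dimensional complex Hilbert spaces H₀, H₁, H₂, …, vectors |α,k⟩ ∈ H_k for each word α ∈ [N]^{≤k} satisfying M_{α,β} = ⟨α,k | β,k⟩ for all α,β ∈ [N]^{≤k}, and linear isometries W_k : H_k → H_{k+1} satisfying W_k |α,k⟩ = |α,k+1⟩ for each α ∈ [N]^{≤k}. -/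
open scoped ComplexOrder

/-- Words in the alphabet `[N] = {1,…,N}`; the empty list is the empty word `0`. -/
abbrev Word (N : ℕ) := List (Fin N)

noncomputable instance wordLEFintype (N k : ℕ) : Fintype {w : Word N // w.length ≤ k} :=
  (List.finite_length_le (Fin N) k).fintype

def cert {N : ℕ} (M : Word N → Word N → ℂ) (k : ℕ) :
    Matrix {w : Word N // w.length ≤ k} {w : Word N // w.length ≤ k} ℂ :=
  Matrix.of fun a b => M a.1 b.1

structure FDHilbert where
  carrier : Type
  [grp : NormedAddCommGroup carrier]
  [ips : InnerProductSpace ℂ carrier]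
  [fd : FiniteDimensional ℂ carrier]

attribute [instance] FDHilbert.grp FDHilbert.ips FDHilbert.fd

/-!
Moore's theorem (`RKHS.OfKernel`) realizes the infinite positive semidefinite matrix `M` as the
Gram matrix of vectors `e α` in a single Hilbert space; `M` is positive semidefinite on finitely
supported vectors because every finite set of words lies among those of length at most some `k`.
Then `H k` is the span of the `e α` with `|α| ≤ k`, and `W k` is the inclusion `H k ≤ H (k + 1)`.
-/

open scoped InnerProductSpace

universe u v

theorem Matrix.PosSemidef.of_submatrix_subtype {n ι R : Type*} [Ring R] [PartialOrder R]
    [StarRing R] {A : Matrix n n R} (P : ι → n → Prop) (hP : ∀ s : Finset n, ∃ k, ∀ i ∈ s, P k i)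
    (hA : ∀ k, (A.submatrix ((↑) : Subtype (P k) → n) (↑)).PosSemidef) : A.PosSemidef := by
  classical
  refine ⟨IsHermitian.ext fun i j => ?_, fun x => ?_⟩
  · obtain ⟨k, hk⟩ := hP {i, j}
    exact (hA k).isHermitian.apply ⟨i, hk i (by simp)⟩ ⟨j, hk j (by simp)⟩
  · obtain ⟨k, hk⟩ := hP x.support
    simp only [← Finsupp.sum_subtypeDomain_index hk]
    exact (hA k).2 (x.subtypeDomain (P k))

-- `RKHS.OfKernel` takes operator-valued kernels; a scalar kernel acts by multiplication.
theorem Matrix.PosSemidef.map_smul_one {𝕜 X : Type*} [RCLike 𝕜] {K : Matrix X X 𝕜}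
    (hK : K.PosSemidef) : (K.map (· • (1 : 𝕜 →L[𝕜] 𝕜))).PosSemidef := by
  have tfae := (RKHS.posSemidef_tfae (K := K.map (· • (1 : 𝕜 →L[𝕜] 𝕜)))).out 0 2
  refine tfae.mpr ⟨hK.isHermitian.map _ fun a => by ext; simp, fun v => ?_⟩
  convert (RCLike.nonneg_iff.mp (hK.2 v)).1 using 2
  refine Finsupp.sum_congr fun x _ => Finsupp.sum_congr fun y _ => ?_
  simp only [map_apply, _root_.smul_apply, one_apply_eq_self,
    smul_eq_mul, RCLike.inner_apply, map_mul, RCLike.star_def, ← hK.isHermitian.apply x y]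
  ring

theorem Matrix.PosSemidef.exists_inner_eq {𝕜 : Type u} {X : Type v} [RCLike 𝕜]
    {K : Matrix X X 𝕜} (hK : K.PosSemidef) :
    ∃ (E : Type max u v) (_ : NormedAddCommGroup E) (_ : InnerProductSpace 𝕜 E) (e : X → E),
      ∀ x y, ⟪e x, e y⟫_𝕜 = K x y := by
  have := Fact.mk hK.map_smul_one
  refine ⟨RKHS.OfKernel (K.map (· • (1 : 𝕜 →L[𝕜] 𝕜))), inferInstance, inferInstance,
    fun x => RKHS.kerFun _ x 1, fun x y => ?_⟩
  rw [← RKHS.kernel_inner, RKHS.OfKernel.kernel_ofKernel]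
  simp [← hK.isHermitian.apply y x]

/-- Lemma on Gram decompositions for the synchronous NPA hierarchy:
if every finite submatrix `(M_{α,β})_{α,β ∈ [N]^{≤k}}` is positive semidefinite, then there are
finite-dimensional Hilbert spaces `H k`, vectors `|α,k⟩ ∈ H k` for words `α` of length at most
`k` realizing `M` as a Gram matrix, and linear isometries `W k : H k → H (k+1)` sending
`|α,k⟩` to `|α,k+1⟩`. -/
theorem stmt0 (N : ℕ) (M : Word N → Word N → ℂ)
    (hM : ∀ k : ℕ, (cert M k).PosSemidef) :
    ∃ (H : ℕ → FDHilbert) (v : (k : ℕ) → Word N → (H k).carrier)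
      (W : (k : ℕ) → (H k).carrier →ₗᵢ[ℂ] (H (k + 1)).carrier),
      (∀ (k : ℕ) (α β : Word N), α.length ≤ k → β.length ≤ k →
        M α β = inner ℂ (v k α) (v k β)) ∧
      (∀ (k : ℕ) (α : Word N), α.length ≤ k → W k (v k α) = v (k + 1) α) := by
  have hM' : (Matrix.of M).PosSemidef :=
    .of_submatrix_subtype (fun k (w : Word N) => w.length ≤ k)
      (fun s => ⟨s.sup List.length, fun w hw => Finset.le_sup hw⟩) hM
  obtain ⟨E, _, _, e, he⟩ := hM'.exists_inner_eq
  let S (k : ℕ) : Submodule ℂ E := Submodule.span ℂ (e '' {α | α.length ≤ k})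
  have hS (k : ℕ) : S k ≤ S (k + 1) :=
    Submodule.span_mono (Set.image_mono fun α hα => Nat.le_succ_of_le hα)
  have (k : ℕ) : FiniteDimensional ℂ (S k) :=
    FiniteDimensional.span_of_finite ℂ ((List.finite_length_le (Fin N) k).image e)
  refine ⟨fun k => ⟨S k⟩,
    fun k α => if h : α.length ≤ k then ⟨e α, Submodule.subset_span ⟨α, h, rfl⟩⟩ else 0,
    fun k => ⟨Submodule.inclusion (hS k), fun x => rfl⟩,
    fun k α β hα hβ => ?_, fun k α hα => ?_⟩
  · simp [dif_pos hα, dif_pos hβ, he]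
  · simp only [dif_pos hα, dif_pos (Nat.le_succ_of_le hα)]
    rfl
end

section
/- Let d ∈ ℕ. The matrix p_{sic,d} is a matricially spanning quantum correlation of dimension d if and only if there exists a SIC-POVM in M_d(ℂ). -/
/-!
A projection `P` with `Tr(P P) = 1` has `Tr P = rank P = 1`. If moreover `Tr(P_x P_y) = 1/(d+1)`
for `x ≠ y`, then `M = ∑ P_i - d • 1` satisfies `Tr(M P_j) = 1 + (d² - 1)/(d + 1) - d = 0` for all
`j`; as the `P_j` span `M_d(ℂ)`, also `Tr(M Mᴴ) = 0`, so `M = 0`. Conversely, for a SIC-POVM the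
trace of `(∑ P_i) P_y = d P_y` reads `d = 1 + (d² - 1) c`, which forces `c = 1/(d+1)` as soon as
there are two distinct indices, i.e. `d ≥ 2`.
-/

/-- `p` is a matricially spanning quantum correlation of dimension `d`: there are projections
`P₁,…,P_N ∈ M_d(ℂ)` spanning `M_d(ℂ)` with `p x y = (1/d)·Tr(P_x P_y)`. -/
def IsMatSpanning (N d : ℕ) (p : Fin N → Fin N → ℂ) : Prop :=
  ∃ P : Fin N → Matrix (Fin d) (Fin d) ℂ,
    (∀ x, (P x).IsHermitian ∧ P x * P x = P x) ∧
    Submodule.span ℂ (Set.range P) = ⊤ ∧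
    (∀ x y, p x y = (1 / (d : ℂ)) * (P x * P y).trace)

/-- The correlation `p_{sic,d}`: `1/d` on the diagonal and `1/(d(d+1))` off the diagonal. -/
noncomputable def pSIC (d : ℕ) : Fin (d ^ 2) → Fin (d ^ 2) → ℂ :=
  fun x y => if x = y then 1 / (d : ℂ) else 1 / ((d : ℂ) * ((d : ℂ) + 1))

/-- `P` is a SIC-POVM in `M_d(ℂ)`: `d²` rank-one projections spanning `M_d(ℂ)`, summing to
`d·I_d`, with constant pairwise trace inner products. -/
def IsSICPOVM (d : ℕ) (P : Fin (d ^ 2) → Matrix (Fin d) (Fin d) ℂ) : Prop :=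
  (∀ i, (P i).IsHermitian ∧ P i * P i = P i ∧ (P i).rank = 1) ∧
  Submodule.span ℂ (Set.range P) = ⊤ ∧
  ∑ i, P i = (d : ℂ) • (1 : Matrix (Fin d) (Fin d) ℂ) ∧
  ∃ c : ℂ, ∀ i j, i ≠ j → (P i * P j).trace = c

namespace Matrix

variable {n ι : Type*} [Fintype n]

theorem trace_eq_rank_of_isIdempotentElem [DecidableEq n] {K : Type*} [Field K] {A : Matrix n n K}
    (hA : IsIdempotentElem A) : A.trace = A.rank := by
  rw [← trace_toLin'_eq]
  exact (LinearMap.IsIdempotentElem.isProj_range _ (hA.map toLinAlgEquiv')).trace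

theorem eq_zero_of_trace_mul_eq_zero {R : Type*} [Field R] [PartialOrder R] [StarRing R]
    [StarOrderedRing R] {P : ι → Matrix n n R} (hspan : Submodule.span R (Set.range P) = ⊤)
    {M : Matrix n n R} (hM : ∀ i, (M * P i).trace = 0) : M = 0 := by
  have hfun : traceLinearMap n R R ∘ₗ LinearMap.mulLeft R M = 0 :=
    LinearMap.ext_on_range hspan hM
  exact trace_mul_conjTranspose_self_eq_zero_iff.mp (LinearMap.congr_fun hfun Mᴴ)

theorem trace_sum_mul_eq [Fintype ι] [DecidableEq ι] {R : Type*} [CommRing R]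
    (P : ι → Matrix n n R) {j : ι} {a c : R} (hdiag : (P j * P j).trace = a)
    (hoff : ∀ i, i ≠ j → (P i * P j).trace = c) :
    ((∑ i, P i) * P j).trace = a + ((Fintype.card ι : R) - 1) * c := by
  rw [Finset.sum_mul, trace_sum, ← Finset.add_sum_erase _ _ (Finset.mem_univ j), hdiag,
    Finset.sum_congr rfl fun i hi => hoff i (Finset.ne_of_mem_erase hi), Finset.sum_const,
    Finset.card_erase_of_mem (Finset.mem_univ j), Finset.card_univ, nsmul_eq_mul,
    Nat.cast_sub (Fintype.card_pos_iff.mpr ⟨j⟩)]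
  simp

end Matrix

open Matrix

theorem pSIC_eq_iff {d : ℕ} (x y : Fin (d ^ 2)) (t : ℂ) :
    pSIC d x y = 1 / d * t ↔ t = if x = y then 1 else 1 / ((d : ℂ) + 1) := by
  have hd : (d : ℂ) ≠ 0 := Nat.cast_ne_zero.mpr fun h => by subst h; exact x.elim0
  have hd1 : (d : ℂ) + 1 ≠ 0 := by exact_mod_cast d.succ_ne_zero
  unfold pSIC
  split_ifs <;> field_simp <;> exact eq_comm

open scoped ComplexOrder in
theorem isSICPOVM_of_pSIC_eq {d : ℕ} {P : Fin (d ^ 2) → Matrix (Fin d) (Fin d) ℂ}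
    (hP : ∀ x, (P x).IsHermitian ∧ IsIdempotentElem (P x))
    (hspan : Submodule.span ℂ (Set.range P) = ⊤)
    (hp : ∀ x y, pSIC d x y = 1 / d * (P x * P y).trace) : IsSICPOVM d P := by
  have htr x y := (pSIC_eq_iff x y _).mp (hp x y)
  have hdiag x : (P x * P x).trace = 1 := by simpa using htr x x
  have hoff x y (hxy : x ≠ y) : (P x * P y).trace = 1 / ((d : ℂ) + 1) := by
    simpa [hxy] using htr x y
  have htrace x : (P x).trace = 1 := (hP x).2.eq ▸ hdiag x
  have hrank x : (P x).rank = 1 := by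
    exact_mod_cast (trace_eq_rank_of_isIdempotentElem (hP x).2).symm.trans (htrace x)
  have hsum : ∑ i, P i - (d : ℂ) • 1 = 0 := by
    refine eq_zero_of_trace_mul_eq_zero hspan fun j => ?_
    have hd : (d : ℂ) + 1 ≠ 0 := by exact_mod_cast d.succ_ne_zero
    rw [sub_mul, trace_sub, trace_sum_mul_eq P (hdiag j) fun i hi => hoff i j hi, smul_mul,
      one_mul, trace_smul, htrace j, Fintype.card_fin]
    push_cast
    field_simp
    ring
  exact ⟨fun x => ⟨(hP x).1, (hP x).2, hrank x⟩, hspan, sub_eq_zero.mp hsum, _, hoff⟩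

theorem IsSICPOVM.pSIC_eq {d : ℕ} {P : Fin (d ^ 2) → Matrix (Fin d) (Fin d) ℂ}
    (hP : IsSICPOVM d P) (x y : Fin (d ^ 2)) : pSIC d x y = 1 / d * (P x * P y).trace := by
  obtain ⟨hproj, -, hsum, c, hc⟩ := hP
  have htrace x : (P x).trace = 1 := by
    rw [trace_eq_rank_of_isIdempotentElem (hproj x).2.1, (hproj x).2.2, Nat.cast_one]
  have hdiag x : (P x * P x).trace = 1 := (hproj x).2.1.symm ▸ htrace x
  rw [pSIC_eq_iff]
  split_ifs with hxy
  · rw [hxy, hdiag]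
  have hd1 : (d : ℂ) - 1 ≠ 0 := by
    rw [sub_ne_zero, Nat.cast_ne_one]
    rintro rfl
    exact hxy (Subsingleton.elim (α := Fin 1) x y)
  have hd : (d : ℂ) + 1 ≠ 0 := by exact_mod_cast d.succ_ne_zero
  have key := trace_sum_mul_eq P (hdiag y) fun i hi => hc i y hi
  rw [hsum, smul_mul, one_mul, trace_smul, htrace y, Fintype.card_fin] at key
  rw [hc x y hxy, eq_div_iff hd]
  apply mul_left_cancel₀ hd1
  push_cast at key
  linear_combination -key

/-- `p_{sic,d}` is a matricially spanning quantum correlation of dimension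
`d` if and only if there exists a SIC-POVM in `M_d(ℂ)`. -/
theorem stmt10 (d : ℕ) :
    IsMatSpanning (d ^ 2) d (pSIC d) ↔ ∃ P, IsSICPOVM d P := by
  constructor
  · rintro ⟨P, hP, hspan, hp⟩
    exact ⟨P, isSICPOVM_of_pSIC_eq hP hspan hp⟩
  · rintro ⟨P, hP⟩
    exact ⟨P, fun x => ⟨(hP.1 x).1, (hP.1 x).2.1⟩, hP.2.1, hP.pSIC_eq⟩
end

section
/- Let d ∈ ℕ, d ≥ 2, and let T₁ be the (d²+1)×(d²+1) matrix of the SIC certificate. Let L be the d²×(d²+1) real matrix with rows indexed 0,…,d²−1 and columns indexed 0,…,d² defined by: L_{0,0} = 1 and L_{0,j} = 1/d for j ≥ 1; and for 1 ≤ k ≤ d²−1, L_{k,j} = 0 for j < k, L_{k,k} = x_k, and L_{k,j} = −x_k/(d²−k) for j > k, where x_k = √(d²−k)/√((d+1)(d²−k+1)). Then Lᵀ L = T₁. -/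
open Matrix

/-- The SIC certificate `T₁`: the `(d²+1)×(d²+1)` real symmetric matrix with rows and columns
indexed by `{0,1,…,d²}`, with `(T₁)_{0,0} = 1`, `(T₁)_{0,x} = (T₁)_{x,0} = 1/d`,
`(T₁)_{x,x} = 1/d`, and `(T₁)_{x,y} = 1/(d(d+1))` for distinct `x,y ∈ {1,…,d²}`. -/
noncomputable def sicCert (d : ℕ) : Matrix (Fin (d ^ 2 + 1)) (Fin (d ^ 2 + 1)) ℝ :=
  Matrix.of fun x y =>
    if x = y then (if (x : ℕ) = 0 then 1 else 1 / d)
    else if (x : ℕ) = 0 ∨ (y : ℕ) = 0 then 1 / d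
    else 1 / (d * ((d : ℝ) + 1))

/-- `x_k = √(d²−k) / √((d+1)(d²−k+1))`. -/
noncomputable def sicX (d k : ℕ) : ℝ :=
  Real.sqrt ((d ^ 2 : ℝ) - k) / Real.sqrt (((d : ℝ) + 1) * ((d ^ 2 : ℝ) - k + 1))

/-- The `d² × (d²+1)` matrix `L` of Section 5.1: `L_{0,0} = 1`, `L_{0,j} = 1/d` for `j ≥ 1`;
and for `1 ≤ k ≤ d²−1`, `L_{k,j} = 0` for `j < k`, `L_{k,k} = x_k`, and
`L_{k,j} = −x_k/(d²−k)` for `j > k`. -/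
noncomputable def sicL (d : ℕ) : Matrix (Fin (d ^ 2)) (Fin (d ^ 2 + 1)) ℝ :=
  Matrix.of fun k j =>
    if (k : ℕ) = 0 then (if (j : ℕ) = 0 then 1 else 1 / d)
    else if (j : ℕ) < (k : ℕ) then 0
    else if (j : ℕ) = (k : ℕ) then sicX d k
    else -(sicX d k) / ((d ^ 2 : ℝ) - k)

/-
Column `j ≥ 1` of `L` is `(1/d, -x₁/(d²-1), …, -x_{j-1}/(d²-j+1), x_j, 0, …, 0)`, and since
`x_k² = (d²-k)/((d+1)(d²-k+1))` the squares `(x_k/(d²-k))² = 1/(d+1) · (1/(d²-k) - 1/(d²-k+1))`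
telescope. So for `1 ≤ i ≤ j` the inner product of columns `i` and `j` is
`1/d² + 1/(d+1) · (1/(d²-i+1) - 1/d²) + x_i L_{i,j}`, which is `1/d` for `i = j` (where
`x_i L_{i,i} = x_i²`) and `1/(d(d+1))` for `i < j` (where `x_i L_{i,j} = -x_i²/(d²-i)`).
-/

open Finset

namespace SIC

/-- The entries of `sicL` as a function of natural-number indices; for `k = d²` (one row beyond
the matrix) all entries in columns `j ≤ d²` vanish, since `x_{d²} = 0`. -/
noncomputable def entry (d k j : ℕ) : ℝ :=
  if k = 0 then (if j = 0 then 1 else 1 / d)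
  else if j < k then 0
  else if j = k then sicX d k
  else -(sicX d k) / ((d ^ 2 : ℝ) - k)

theorem sicL_apply (d : ℕ) (k : Fin (d ^ 2)) (j : Fin (d ^ 2 + 1)) :
    sicL d k j = entry d k j :=
  rfl

theorem entry_of_lt {d k j : ℕ} (h : j < k) : entry d k j = 0 := by
  simp [entry, h, Nat.ne_zero_of_lt h]

theorem entry_self {d k : ℕ} (hk : k ≠ 0) : entry d k k = sicX d k := by
  simp [entry, hk]

theorem entry_of_gt {d k j : ℕ} (hk : k ≠ 0) (h : k < j) :
    entry d k j = -(sicX d k) / ((d ^ 2 : ℝ) - k) := by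
  simp [entry, hk, h.not_gt, h.ne']

theorem entry_sq_row_eq_zero {d j : ℕ} (hd : 0 < d) (hj : j ≤ d ^ 2) :
    entry d (d ^ 2) j = 0 := by
  rcases hj.lt_or_eq with hj | rfl
  · exact entry_of_lt hj
  · rw [entry_self (by positivity)]
    simp [sicX]

theorem sicX_sq {d k : ℕ} (hk : k ≤ d ^ 2) :
    sicX d k ^ 2 = ((d ^ 2 : ℝ) - k) / (((d : ℝ) + 1) * ((d ^ 2 : ℝ) - k + 1)) := by
  have hk' : (k : ℝ) ≤ (d : ℝ) ^ 2 := by exact_mod_cast hk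
  rw [sicX, div_pow, Real.sq_sqrt (by linarith), Real.sq_sqrt (by positivity)]

theorem sicX_div_sq {d k : ℕ} (hk : k < d ^ 2) :
    (sicX d k / ((d ^ 2 : ℝ) - k)) ^ 2 =
      1 / (((d : ℝ) + 1) * ((d ^ 2 : ℝ) - (k + 1 : ℕ) + 1)) -
        1 / (((d : ℝ) + 1) * ((d ^ 2 : ℝ) - k + 1)) := by
  have hk' : (k : ℝ) + 1 ≤ (d : ℝ) ^ 2 := by exact_mod_cast hk
  have hpos : (d : ℝ) ^ 2 - k ≠ 0 := by linarith
  have hpos' : (d : ℝ) ^ 2 - k + 1 ≠ 0 := by linarith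
  have hpos'' : (d : ℝ) ^ 2 - (k + 1) + 1 ≠ 0 := by linarith
  rw [div_pow, sicX_sq hk.le]
  push_cast
  field_simp
  ring

theorem sum_Ico_sicX_div_sq {d i : ℕ} (hi : 1 ≤ i) (hid : i ≤ d ^ 2) :
    ∑ k ∈ Ico 1 i, (sicX d k / ((d ^ 2 : ℝ) - k)) ^ 2 =
      1 / (((d : ℝ) + 1) * ((d ^ 2 : ℝ) - i + 1)) - 1 / (((d : ℝ) + 1) * (d : ℝ) ^ 2) := by
  rw [sum_congr rfl fun k hk => sicX_div_sq ((mem_Ico.mp hk).2.trans_le hid),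
    sum_Ico_sub (fun k : ℕ => 1 / (((d : ℝ) + 1) * ((d ^ 2 : ℝ) - k + 1))) hi]
  simp

theorem transpose_sicL_mul_sicL_apply {d : ℕ} (hd : 0 < d) (i j : Fin (d ^ 2 + 1)) :
    ((sicL d)ᵀ * sicL d) i j = ∑ k ∈ range (i + 1), entry d k i * entry d k j := by
  have hi : (i : ℕ) ≤ d ^ 2 := Nat.lt_succ_iff.mp i.isLt
  rw [mul_apply]
  simp only [transpose_apply, sicL_apply]
  rw [Fin.sum_univ_eq_sum_range (fun k => entry d k i * entry d k j),
    ← add_zero (∑ k ∈ range (d ^ 2), _), ← zero_mul (entry d (d ^ 2) j),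
    ← entry_sq_row_eq_zero hd hi, ← sum_range_succ]
  refine (sum_subset (range_subset_range.mpr (by omega)) fun k _ hk => ?_).symm
  rw [entry_of_lt (by simpa using hk), zero_mul]

theorem sum_range_entry_mul_entry {d i j : ℕ} (hi : 1 ≤ i) (hij : i ≤ j) (hid : i ≤ d ^ 2) :
    ∑ k ∈ range (i + 1), entry d k i * entry d k j =
      1 / (d : ℝ) ^ 2 + (1 / (((d : ℝ) + 1) * ((d ^ 2 : ℝ) - i + 1)) -
        1 / (((d : ℝ) + 1) * (d : ℝ) ^ 2)) + sicX d i * entry d i j := by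
  have hcol : ∀ k ∈ Ico 1 i, entry d k i * entry d k j = (sicX d k / ((d ^ 2 : ℝ) - k)) ^ 2 := by
    intro k hk
    obtain ⟨hk1, hki⟩ := mem_Ico.mp hk
    rw [entry_of_gt (by omega) hki, entry_of_gt (by omega) (hki.trans_le hij)]
    ring
  rw [sum_range_succ, range_eq_Ico, ← sum_Ico_consecutive _ zero_le_one hi,
    sum_congr rfl hcol, sum_Ico_sicX_div_sq hi hid, entry_self (by omega)]
  have hj : j ≠ 0 := by omega
  simp [entry, Nat.ne_zero_of_lt hi, hj, sq]

theorem sum_range_entry_mul_self {d i : ℕ} (hd : 0 < d) (hi : 1 ≤ i) (hid : i ≤ d ^ 2) :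
    ∑ k ∈ range (i + 1), entry d k i * entry d k i = 1 / d := by
  have hid' : (i : ℝ) ≤ (d : ℝ) ^ 2 := by exact_mod_cast hid
  have hden : (d : ℝ) ^ 2 - i + 1 ≠ 0 := by linarith
  rw [sum_range_entry_mul_entry hi le_rfl hid, entry_self (by omega), ← sq, sicX_sq hid]
  field_simp
  ring

theorem sum_range_entry_mul_of_lt {d i j : ℕ} (hd : 0 < d) (hi : 1 ≤ i) (hij : i < j)
    (hjd : j ≤ d ^ 2) :
    ∑ k ∈ range (i + 1), entry d k i * entry d k j = 1 / (d * ((d : ℝ) + 1)) := by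
  have hid' : (i : ℝ) < (d : ℝ) ^ 2 := by exact_mod_cast hij.trans_le hjd
  have hden : (d : ℝ) ^ 2 - i ≠ 0 := by linarith
  have hden' : (d : ℝ) ^ 2 - i + 1 ≠ 0 := by linarith
  rw [sum_range_entry_mul_entry hi hij.le (by omega), entry_of_gt (by omega) hij,
    mul_div_assoc', mul_neg, ← sq, sicX_sq (by omega)]
  field_simp
  ring

theorem sicCert_isSymm (d : ℕ) : (sicCert d).IsSymm := by
  refine IsSymm.ext fun i j => ?_
  by_cases h : i = j
  · subst h; rfl
  · simp [sicCert, h, Ne.symm h, or_comm]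

end SIC

open SIC in
/-- the matrix `L` factors the SIC certificate: `Lᵀ L = T₁`. -/
theorem stmt12 (d : ℕ) (hd : 2 ≤ d) : (sicL d)ᵀ * sicL d = sicCert d := by
  have hd0 : 0 < d := by omega
  ext i j
  wlog hij : (i : ℕ) ≤ j generalizing i j
  · rw [← transpose_apply ((sicL d)ᵀ * sicL d), transpose_mul, transpose_transpose,
      (sicCert_isSymm d).apply j i]
    exact this j i (by omega)
  rw [transpose_sicL_mul_sicL_apply hd0]
  rcases Nat.eq_zero_or_pos i with hi | hi
  · obtain rfl : i = 0 := Fin.ext hi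
    rcases eq_or_ne j 0 with rfl | hj
    · simp [entry, sicCert]
    · simp [entry, sicCert, hj, Ne.symm hj, Fin.val_eq_zero_iff]
  rcases hij.lt_or_eq with hlt | heq
  · have hne : i ≠ j := fun h => hlt.ne (congrArg _ h)
    rw [sum_range_entry_mul_of_lt hd0 hi hlt (by omega)]
    simp only [sicCert, of_apply, if_neg hne, hi.ne', Nat.ne_zero_of_lt hlt, or_self, if_false]
  · obtain rfl : i = j := Fin.ext heq
    rw [sum_range_entry_mul_self hd0 hi (by omega)]
    simp only [sicCert, of_apply, if_true, hi.ne', if_false]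
end

section
/- Let d ∈ ℕ, d ≥ 2, and let T₁ be the (d²+1)×(d²+1) matrix of the SIC certificate. Then T₁ is positive semidefinite and rank(T₁) = d². -/
/-!
`T₁` is the Gram matrix of the `d² + 1` vectors `b₀ = (1/d) 𝟙` and `b_x = s e_x + t 𝟙`
(`x = 1, …, d²`) in `ℝ^{d²}`, where `s = 1/√(d+1)` and `s + d² t = 1`. Hence `T₁ = BᵀB` is
positive semidefinite and `rank T₁ = rank B` for the `d² × (d² + 1)` matrix `B` with these
columns. The last `d²` columns of `B` form `s I + t J`, whose eigenvalues `s` and `s + d² t = 1`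
are nonzero, so `rank B = d²`.
-/

open Matrix

namespace Matrix

variable {ι R : Type*}

def allOnes (ι R : Type*) [One R] : Matrix ι ι R := of fun _ _ => 1

@[simp]
lemma allOnes_apply [One R] (i j : ι) : allOnes ι R i j = 1 := rfl

@[simp]
lemma transpose_allOnes [One R] : (allOnes ι R)ᵀ = allOnes ι R := rfl

variable [Fintype ι] [CommRing R]

lemma allOnes_mul_allOnes : allOnes ι R * allOnes ι R = (Fintype.card ι : R) • allOnes ι R := by
  ext i j
  simp [mul_apply]

variable [DecidableEq ι]

lemma smul_one_add_smul_allOnes_mul (a b c e : R) :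
    (a • 1 + b • allOnes ι R) * (c • 1 + e • allOnes ι R)
      = (a * c) • 1 + (a * e + b * c + Fintype.card ι * b * e) • allOnes ι R := by
  simp only [add_mul, mul_add, smul_mul_smul, mul_one, one_mul, allOnes_mul_allOnes, smul_smul]
  module

lemma isUnit_smul_one_add_smul_allOnes {K : Type*} [Field K] {a b : K} (ha : a ≠ 0)
    (hab : a + Fintype.card ι * b ≠ 0) : IsUnit (a • 1 + b • allOnes ι K) := by
  have hinv : (a • 1 + b • allOnes ι K) *
      (a⁻¹ • 1 + (-b / (a * (a + Fintype.card ι * b))) • allOnes ι K) = 1 := by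
    rw [smul_one_add_smul_allOnes_mul, mul_inv_cancel₀ ha, one_smul, add_eq_left, smul_eq_zero]
    left
    have h : -b / (a * (a + Fintype.card ι * b)) * (a + Fintype.card ι * b) = -b * a⁻¹ := by
      rw [div_mul_eq_mul_div, mul_div_mul_right _ _ hab, div_eq_mul_inv]
    linear_combination h
  exact (isUnit_iff_isUnit_det _).mpr (isUnit_det_of_right_inverse hinv)

end Matrix

namespace SicCertificate

noncomputable def diagWeight (d : ℕ) : ℝ := √(((d : ℝ) + 1)⁻¹)

noncomputable def constWeight (d : ℕ) : ℝ := (1 - diagWeight d) / (d : ℝ) ^ 2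

noncomputable def blockFactor (d : ℕ) : Matrix (Fin (d ^ 2)) (Fin (d ^ 2)) ℝ :=
  diagWeight d • 1 + constWeight d • allOnes _ _

noncomputable def gramFactor (d : ℕ) : Matrix (Fin (d ^ 2)) (Fin (d ^ 2 + 1)) ℝ :=
  of fun i => Fin.cons (1 / d) (blockFactor d i)

lemma sicCert_zero_zero (d : ℕ) : sicCert d 0 0 = 1 := by simp [sicCert]

lemma sicCert_zero_succ (d : ℕ) (k : Fin (d ^ 2)) : sicCert d 0 k.succ = 1 / d := by
  simp [sicCert, (Fin.succ_ne_zero k).symm]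

lemma sicCert_succ_zero (d : ℕ) (j : Fin (d ^ 2)) : sicCert d j.succ 0 = 1 / d := by
  simp [sicCert, Fin.succ_ne_zero j]

lemma sicCert_succ_succ (d : ℕ) (j k : Fin (d ^ 2)) :
    sicCert d j.succ k.succ = if j = k then 1 / (d : ℝ) else 1 / (d * ((d : ℝ) + 1)) := by
  simp [sicCert, Fin.succ_inj]

lemma diagWeight_sq (d : ℕ) : diagWeight d ^ 2 = ((d : ℝ) + 1)⁻¹ :=
  Real.sq_sqrt (by positivity)

lemma diagWeight_pos (d : ℕ) : 0 < diagWeight d :=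
  Real.sqrt_pos.mpr (by positivity)

lemma diagWeight_add_constWeight {d : ℕ} (hd : d ≠ 0) :
    diagWeight d + (d : ℝ) ^ 2 * constWeight d = 1 := by
  unfold constWeight
  field_simp
  ring

lemma blockFactor_mul_self {d : ℕ} (hd : d ≠ 0) :
    blockFactor d * blockFactor d = ((d : ℝ) + 1)⁻¹ • 1 + ((d : ℝ) * (d + 1))⁻¹ • allOnes _ _ := by
  rw [blockFactor, smul_one_add_smul_allOnes_mul, ← sq, diagWeight_sq]
  congr 2
  have hs : diagWeight d ^ 2 * (d + 1) = 1 := by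
    rw [diagWeight_sq]
    field_simp
  simp only [Fintype.card_fin, Nat.cast_pow, constWeight]
  field_simp
  linear_combination -hs

lemma blockFactor_transpose (d : ℕ) : (blockFactor d)ᵀ = blockFactor d := by
  simp [blockFactor]

lemma sum_blockFactor_apply {d : ℕ} (hd : d ≠ 0) (k : Fin (d ^ 2)) :
    ∑ i, blockFactor d i k = 1 := by
  simpa [blockFactor, one_apply, Finset.sum_add_distrib] using diagWeight_add_constWeight hd

lemma gramFactor_transpose_mul_self {d : ℕ} (hd : d ≠ 0) :
    (gramFactor d)ᵀ * gramFactor d = sicCert d := by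
  ext j k
  induction j using Fin.cases with
  | zero =>
    induction k using Fin.cases with
    | zero =>
      simp only [mul_apply, transpose_apply, gramFactor, of_apply, Fin.cons_zero, Finset.sum_const,
        Finset.card_univ, Fintype.card_fin, nsmul_eq_mul, Nat.cast_pow, sicCert_zero_zero]
      field_simp
    | succ k =>
      simp only [mul_apply, transpose_apply, gramFactor, of_apply, Fin.cons_zero, Fin.cons_succ]
      rw [← Finset.mul_sum, sum_blockFactor_apply hd, mul_one, sicCert_zero_succ]
  | succ j =>
    induction k using Fin.cases with
    | zero =>
      simp only [mul_apply, transpose_apply, gramFactor, of_apply, Fin.cons_zero, Fin.cons_succ]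
      rw [← Finset.sum_mul, sum_blockFactor_apply hd, one_mul, sicCert_succ_zero]
    | succ k =>
      change ((blockFactor d)ᵀ * blockFactor d) j k = _
      rw [blockFactor_transpose, blockFactor_mul_self hd, sicCert_succ_succ]
      by_cases hjk : j = k
      · simp only [hjk, Matrix.add_apply, Matrix.smul_apply, one_apply_eq, allOnes_apply,
          smul_eq_mul, mul_one, if_true]
        field_simp
      · simp [hjk]

lemma isUnit_blockFactor {d : ℕ} (hd : d ≠ 0) : IsUnit (blockFactor d) := by
  refine isUnit_smul_one_add_smul_allOnes (diagWeight_pos d).ne' ?_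
  simp [diagWeight_add_constWeight hd]

lemma rank_gramFactor {d : ℕ} (hd : d ≠ 0) : (gramFactor d).rank = d ^ 2 := by
  refine le_antisymm ?_ ?_
  · simpa using rank_le_card_height (gramFactor d)
  · calc d ^ 2 = (blockFactor d).rank := by simp [rank_of_isUnit _ (isUnit_blockFactor hd)]
      _ = ((gramFactor d).submatrix id Fin.succ).rank := rfl
      _ ≤ (gramFactor d).rank := rank_submatrix_le _ _ _

end SicCertificate

/-- the SIC certificate `T₁` is positive semidefinite of rank `d²`. -/
theorem stmt13 (d : ℕ) (hd : 2 ≤ d) :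
    (sicCert d).PosSemidef ∧ (sicCert d).rank = d ^ 2 := by
  have hd0 : d ≠ 0 := by omega
  rw [← SicCertificate.gramFactor_transpose_mul_self hd0, rank_transpose_mul_self]
  exact ⟨by simpa using posSemidef_conjTranspose_mul_self (SicCertificate.gramFactor d),
    SicCertificate.rank_gramFactor hd0⟩
end

section
/- Let d ∈ ℕ, d ≥ 2, and let T₁ be the (d(d+1)+1)×(d(d+1)+1) matrix of the MUB certificate. Define u₀ ∈ ℝ^{d(d+1)+1} by u₀ = (1, 1/d, …, 1/d), and for each x ∈ [d+1] and k ∈ {1,…,d−1} define u_{x,k} ∈ ℝ^{d(d+1)+1} to be the vector whose 0-coordinate is 0, whose x-th block of d coordinates equals v_k, and which is zero elsewhere, where v_k ∈ ℝ^d has its first k−1 coordinates equal to 0, coordinate k equal to 1, and all remaining coordinates equal to −1/(d−k). Then the vectors u₀ and u_{x,k} (x ∈ [d+1], k ∈ {1,…,d−1}) are pairwise orthogonal eigenvectors of T₁ with T₁u₀ = ((2d+1)/d)·u₀ and T₁u_{x,k} = (1/d)·u_{x,k}. -/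
open Matrix

/-- The index set `{0} ∪ ([d+1] × [d])` for the MUB certificate;
`none` is the distinguished index `0`. -/
abbrev MubIdx (d : ℕ) := Option (Fin (d + 1) × Fin d)

/-- The MUB certificate `T₁`: the `(d(d+1)+1)×(d(d+1)+1)` real symmetric matrix with
`(T₁)_{0,0} = 1`, `(T₁)_{0,(x,i)} = (T₁)_{(x,i),0} = 1/d`, `(T₁)_{(x,i),(x,i)} = 1/d`,
`(T₁)_{(x,i),(x,j)} = 0` for `i ≠ j`, and `(T₁)_{(x,i),(y,j)} = 1/d²` whenever `x ≠ y`. -/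
noncomputable def mubCert (d : ℕ) : Matrix (MubIdx d) (MubIdx d) ℝ :=
  Matrix.of fun a b =>
    match a, b with
    | none, none => 1
    | none, some _ => 1 / d
    | some _, none => 1 / d
    | some (x, i), some (y, j) =>
        if x = y then (if i = j then 1 / d else 0) else 1 / (d : ℝ) ^ 2

/-- The vector `v_k ∈ ℝ^d` (coordinates numbered `1,…,d`, so the `Fin d` index `i`
corresponds to coordinate `i+1`): its first `k−1` coordinates are `0`, coordinate `k` is `1`,
and the remaining coordinates are `−1/(d−k)`. -/
noncomputable def mubV (d k : ℕ) : Fin d → ℝ :=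
  fun i => if (i : ℕ) + 1 < k then 0 else if (i : ℕ) + 1 = k then 1 else -1 / ((d : ℝ) - k)

/-- The vector `u₀ = (1, 1/d, …, 1/d)`. -/
noncomputable def mubU0 (d : ℕ) : MubIdx d → ℝ :=
  fun a => match a with
  | none => 1
  | some _ => 1 / d

/-- The vector `u_{x,k}`: its `0`-coordinate is `0`, its `x`-th block of `d` coordinates is
`v_k`, and it vanishes elsewhere. -/
noncomputable def mubU (d : ℕ) (x : Fin (d + 1)) (k : ℕ) : MubIdx d → ℝ :=
  fun a => match a with
  | none => 0
  | some (y, i) => if y = x then mubV d k i else 0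

/-!
Everything reduces to sums over one block of `d` coordinates. Each `v_k` (`1 ≤ k < d`) sums to
zero, and for `k < l` the vector `v_k` is constant on the support of `v_l`, which gives the
orthogonality relations. Every row of `T₁` is constant on each block `x`, except for the diagonal
entry `1/d` when the row lies in that block; hence `T₁ u_{x,k} = u_{x,k} / d`.
-/

theorem sum_mubV_eq_zero {d k : ℕ} (hk : 1 ≤ k) (hkd : k < d) : ∑ i, mubV d k i = 0 := by
  obtain ⟨j, rfl⟩ : ∃ j, k = j + 1 := ⟨k - 1, by omega⟩
  obtain ⟨m, rfl⟩ : ∃ m, d = j + 1 + m := ⟨d - (j + 1), by omega⟩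
  have hm : (m : ℝ) ≠ 0 := by norm_cast; omega
  rw [Fin.sum_univ_add, Fin.sum_univ_castSucc]
  have hlt : ∀ n, ¬ j + 1 + n < j := by omega
  have hne : ∀ n, j + 1 + n ≠ j := by omega
  simp [mubV, hlt, hne, mul_div_cancel₀ _ hm]

theorem dotProduct_mubU {d : ℕ} (f : MubIdx d → ℝ) (x : Fin (d + 1)) (k : ℕ) :
    f ⬝ᵥ mubU d x k = ∑ i, f (some (x, i)) * mubV d k i := by
  simp [dotProduct, Fintype.sum_option, Fintype.sum_prod_type, mubU, mul_ite]

theorem mubV_mul_mubV_of_lt {d k l : ℕ} (hkl : k < l) (i : Fin d) :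
    mubV d k i * mubV d l i = -1 / ((d : ℝ) - k) * mubV d l i := by
  unfold mubV
  split_ifs <;> first | omega | ring

theorem mubV_dotProduct_mubV {d k l : ℕ} (hkd : k < d) (hld : l < d) (hkl : k ≠ l) :
    mubV d k ⬝ᵥ mubV d l = 0 := by
  wlog h : k < l generalizing k l
  · rw [dotProduct_comm]
    exact this hld hkd hkl.symm (by omega)
  simp only [dotProduct, mubV_mul_mubV_of_lt h, ← Finset.mul_sum,
    sum_mubV_eq_zero (by omega) hld, mul_zero]

theorem mubU0_dotProduct_mubU {d k : ℕ} (hk : 1 ≤ k) (hkd : k < d) (x : Fin (d + 1)) :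
    mubU0 d ⬝ᵥ mubU d x k = 0 := by
  simp only [dotProduct_mubU, mubU0, ← Finset.mul_sum, sum_mubV_eq_zero hk hkd, mul_zero]

theorem mubU_dotProduct_mubU {d k l : ℕ} (hkd : k < d) (hld : l < d) {x y : Fin (d + 1)}
    (hne : (x, k) ≠ (y, l)) : mubU d x k ⬝ᵥ mubU d y l = 0 := by
  rw [dotProduct_mubU]
  by_cases hxy : y = x
  · subst hxy
    simp only [mubU]
    exact mubV_dotProduct_mubV hkd hld (by rintro rfl; exact hne rfl)
  · simp [mubU, hxy]

theorem mubCert_mulVec_mubU0 {d : ℕ} (hd : d ≠ 0) :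
    mubCert d *ᵥ mubU0 d = ((2 * (d : ℝ) + 1) / d) • mubU0 d := by
  ext (_ | ⟨x, i⟩)
  · simp [mulVec, dotProduct, Fintype.sum_option, mubCert, mubU0]
    field_simp
    ring
  · have hblock : ∀ y, ∑ j, mubCert d (some (x, i)) (some (y, j)) * mubU0 d (some (y, j))
        = 1 / (d : ℝ) ^ 2 := by
      intro y
      by_cases hxy : x = y <;> simp [mubCert, mubU0, hxy] <;> field_simp
    rw [mulVec, dotProduct, Fintype.sum_option, Fintype.sum_prod_type]
    simp only [hblock]
    simp [mubCert, mubU0]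
    field_simp
    ring

theorem mubCert_mulVec_mubU {d k : ℕ} (hk : 1 ≤ k) (hkd : k < d) (x : Fin (d + 1)) :
    mubCert d *ᵥ mubU d x k = (1 / (d : ℝ)) • mubU d x k := by
  ext (_ | ⟨y, j⟩)
  all_goals
    simp [mulVec, dotProduct_mubU, mubCert, mubU, ← Finset.mul_sum, sum_mubV_eq_zero hk hkd]

/-- the vectors `u₀` and `u_{x,k}` (`x ∈ [d+1]`, `1 ≤ k ≤ d−1`) are
pairwise orthogonal eigenvectors of the MUB certificate `T₁`, with
`T₁u₀ = ((2d+1)/d)·u₀` and `T₁u_{x,k} = (1/d)·u_{x,k}`. -/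
theorem stmt15 (d : ℕ) (hd : 2 ≤ d) :
    (∀ (x : Fin (d + 1)) (k : ℕ), 1 ≤ k → k ≤ d - 1 →
      dotProduct (mubU0 d) (mubU d x k) = 0) ∧
    (∀ (x y : Fin (d + 1)) (k l : ℕ), 1 ≤ k → k ≤ d - 1 → 1 ≤ l → l ≤ d - 1 →
      (x, k) ≠ (y, l) → dotProduct (mubU d x k) (mubU d y l) = 0) ∧
    mubCert d *ᵥ mubU0 d = ((2 * (d : ℝ) + 1) / d) • mubU0 d ∧
    (∀ (x : Fin (d + 1)) (k : ℕ), 1 ≤ k → k ≤ d - 1 →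
      mubCert d *ᵥ mubU d x k = (1 / (d : ℝ)) • mubU d x k) :=
  ⟨fun x _ hk hkd => mubU0_dotProduct_mubU hk (by omega) x,
    fun _ _ _ _ _ hkd _ hld hne => mubU_dotProduct_mubU (by omega) (by omega) hne,
    mubCert_mulVec_mubU0 (by omega),
    fun x _ hk hkd => mubCert_mulVec_mubU hk (by omega) x⟩
end

section
/- Let d ∈ ℕ, d ≥ 2, and let T₁ be the (d(d+1)+1)×(d(d+1)+1) matrix of the MUB certificate. Then T₁ is positive semidefinite and rank(T₁) = d². -/
open Matrix

/-!
Let `u = (1, 1/d, …, 1/d)` and let `P` be the orthogonal projection that kills the coordinate `0`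
and subtracts its mean from each of the `d + 1` blocks `{x} × [d]`. Then `T₁ = u uᵀ + P / d`
and `P u = 0`. Both summands are positive semidefinite, and `R = u uᵀ / ‖u‖²` and `P` are
orthogonal idempotents, so `T₁` has the same rank as the projection `R + P`, namely its trace
`1 + (d + 1)(d - 1) = d²`.
-/

open scoped Kronecker

namespace Matrix

section Field

variable {K n : Type*} [Field K] [Fintype n] [DecidableEq n]

theorem rank_eq_trace_of_isIdempotentElem [CharZero K] {Q : Matrix n n K}
    (hQ : IsIdempotentElem Q) : (Q.rank : K) = Q.trace := by
  have h : IsIdempotentElem Q.mulVecLin := by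
    rw [IsIdempotentElem, Module.End.mul_eq_comp, ← mulVecLin_mul, hQ.eq]
  rw [Matrix.rank, ← (LinearMap.IsIdempotentElem.isProj_range _ h).trace, ← toLin'_apply',
    ← toLin_eq_toLin', trace_toLin_eq]

theorem isIdempotentElem_inv_dotProduct_smul_vecMulVec {u : n → K} (hu : u ⬝ᵥ u ≠ 0) :
    IsIdempotentElem ((u ⬝ᵥ u)⁻¹ • vecMulVec u u) := by
  rw [IsIdempotentElem, smul_mul_smul_comm, vecMulVec_mul_vecMulVec, vecMulVec_smul, smul_smul,
    mul_assoc, inv_mul_cancel₀ hu, mul_one]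

theorem rank_smul_add_smul_of_mul_eq_zero {R P : Matrix n n K} (hR : IsIdempotentElem R)
    (hP : IsIdempotentElem P) (hRP : R * P = 0) (hPR : P * R = 0) {a b : K} (ha : a ≠ 0)
    (hb : b ≠ 0) : (a • R + b • P).rank = (R + P).rank := by
  have hQM : (R + P) * (a • R + b • P) = a • R + b • P := by
    simp only [add_mul, mul_add, mul_smul_comm, hR.eq, hP.eq, hRP, hPR, add_zero, zero_add]
  have hMN : (a • R + b • P) * (a⁻¹ • R + b⁻¹ • P) = R + P := by
    simp only [add_mul, mul_add, mul_smul_comm, smul_mul_assoc, hR.eq, hP.eq, hRP, hPR,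
      smul_zero, add_zero, zero_add, smul_smul, inv_mul_cancel₀ ha, inv_mul_cancel₀ hb, one_smul]
  exact le_antisymm (hQM ▸ rank_mul_le_left _ _) (hMN ▸ rank_mul_le_left _ _)

theorem rank_vecMulVec_add_smul [CharZero K] {P : Matrix n n K} {u : n → K}
    (hP : IsIdempotentElem P) (hPu : P *ᵥ u = 0) (huP : u ᵥ* P = 0) (hu : u ⬝ᵥ u ≠ 0)
    {c : K} (hc : c ≠ 0) : ((vecMulVec u u + c • P).rank : K) = P.trace + 1 := by
  set R := (u ⬝ᵥ u)⁻¹ • vecMulVec u u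
  have hR : IsIdempotentElem R := isIdempotentElem_inv_dotProduct_smul_vecMulVec hu
  have hRP : R * P = 0 := by rw [smul_mul_assoc, vecMulVec_mul, huP, vecMulVec_zero, smul_zero]
  have hPR : P * R = 0 := by rw [mul_smul_comm, mul_vecMulVec, hPu, zero_vecMulVec, smul_zero]
  have hM : vecMulVec u u = (u ⬝ᵥ u) • R := by rw [smul_smul, mul_inv_cancel₀ hu, one_smul]
  rw [hM, rank_smul_add_smul_of_mul_eq_zero hR hP hRP hPR hu hc,
    rank_eq_trace_of_isIdempotentElem (hR.add hP (by rw [hRP, hPR, add_zero])), trace_add,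
    trace_smul, trace_vecMulVec, smul_eq_mul, inv_mul_cancel₀ hu, add_comm]

variable (K n) in
noncomputable def centeringMatrix : Matrix n n K :=
  1 - (Fintype.card n : K)⁻¹ • vecMulVec 1 1

theorem transpose_centeringMatrix : (centeringMatrix K n)ᵀ = centeringMatrix K n := by
  rw [centeringMatrix, transpose_sub, transpose_one, transpose_smul, transpose_vecMulVec]

variable [CharZero K] [Nonempty n]

theorem isIdempotentElem_centeringMatrix : IsIdempotentElem (centeringMatrix K n) := by
  have h := isIdempotentElem_inv_dotProduct_smul_vecMulVec (u := (1 : n → K))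
    (by simp [one_dotProduct_one])
  rw [one_dotProduct_one] at h
  exact h.one_sub

theorem centeringMatrix_mulVec_one : centeringMatrix K n *ᵥ 1 = 0 := by
  rw [centeringMatrix, sub_mulVec, one_mulVec, smul_mulVec, vecMulVec_mulVec, one_dotProduct_one]
  ext i
  simp

theorem trace_centeringMatrix : (centeringMatrix K n).trace = Fintype.card n - 1 := by
  rw [centeringMatrix, trace_sub, trace_one, trace_smul, trace_vecMulVec, one_dotProduct_one,
    smul_eq_mul, inv_mul_cancel₀ (by simp)]

end Field

theorem kronecker_mulVec_one {α m n : Type*} [CommSemiring α] [Fintype m] [Fintype n]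
    (A : Matrix m m α) (B : Matrix n n α) :
    (A ⊗ₖ B) *ᵥ 1 = fun p => (A *ᵥ 1) p.1 * (B *ᵥ 1) p.2 := by
  ext p
  simp [mulVec, dotProduct, Fintype.sum_prod_type, Finset.sum_mul_sum]

theorem IsHermitian.posSemidef_of_isIdempotentElem {R n : Type*} [Ring R] [PartialOrder R]
    [StarRing R] [StarOrderedRing R] [Fintype n] {P : Matrix n n R} (hP : P.IsHermitian)
    (hP' : IsIdempotentElem P) : P.PosSemidef := by
  rw [← hP'.eq]
  nth_rw 1 [← hP.eq]
  exact posSemidef_conjTranspose_mul_self P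

section ExtendZero

variable {α m n : Type*}

def extendZero [Zero α] (M : Matrix m n α) : Matrix (Option m) (Option n) α :=
  of fun a b => a.elim 0 fun i => b.elim 0 (M i)

section Zero

variable [Zero α] (M : Matrix m n α)

@[simp] theorem extendZero_some_some (i : m) (j : n) : extendZero M (some i) (some j) = M i j :=
  rfl

@[simp] theorem extendZero_none (b : Option n) : extendZero M none b = 0 := rfl

@[simp] theorem extendZero_some_none (i : m) : extendZero M (some i) none = 0 := rfl

theorem transpose_extendZero : (extendZero M)ᵀ = extendZero Mᵀ := by
  ext (_ | _) (_ | _) <;> rfl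

end Zero

theorem extendZero_mul_extendZero {l : Type*} [NonUnitalNonAssocSemiring α] [Fintype m]
    (M : Matrix l m α) (N : Matrix m n α) : extendZero M * extendZero N = extendZero (M * N) := by
  ext (_ | _) (_ | _) <;> simp [mul_apply, Fintype.sum_option]

theorem trace_extendZero [AddCommMonoid α] [Fintype m] (M : Matrix m m α) :
    (extendZero M).trace = M.trace := by
  simp [trace, Fintype.sum_option]

theorem extendZero_mulVec_eq_zero [NonUnitalNonAssocSemiring α] [Fintype n]
    {M : Matrix m n α} {v : Option n → α} (hv : M *ᵥ (v ∘ some) = 0) :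
    extendZero M *ᵥ v = 0 := by
  ext (_ | i)
  · simp [mulVec, dotProduct]
  · simpa [mulVec, dotProduct] using congrFun hv i

end ExtendZero

end Matrix

section Mub

variable (d : ℕ)

noncomputable def mubVec : MubIdx d → ℝ := fun a => a.elim 1 fun _ => (d : ℝ)⁻¹

noncomputable def mubProj : Matrix (MubIdx d) (MubIdx d) ℝ :=
  extendZero ((1 : Matrix (Fin (d + 1)) (Fin (d + 1)) ℝ) ⊗ₖ centeringMatrix ℝ (Fin d))

theorem transpose_mubProj : (mubProj d)ᵀ = mubProj d := by
  rw [mubProj, transpose_extendZero, ← kroneckerMap_transpose, transpose_one,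
    transpose_centeringMatrix]

theorem mubVec_dotProduct_self_ne_zero : mubVec d ⬝ᵥ mubVec d ≠ 0 := by
  rw [dotProduct, Fintype.sum_option]
  refine (add_pos_of_pos_of_nonneg (by simp [mubVec]) ?_).ne'
  exact Finset.sum_nonneg fun _ _ => mul_self_nonneg _

variable [NeZero d]

theorem mubCert_eq_vecMulVec_add_smul :
    mubCert d = vecMulVec (mubVec d) (mubVec d) + (d : ℝ)⁻¹ • mubProj d := by
  have hd : (d : ℝ) ≠ 0 := Nat.cast_ne_zero.mpr (NeZero.ne d)
  ext (_ | ⟨x, i⟩) (_ | ⟨y, j⟩) <;>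
    simp only [mubCert, mubVec, mubProj, centeringMatrix, of_apply, Matrix.add_apply,
      Matrix.smul_apply, Matrix.sub_apply, vecMulVec_apply, extendZero_some_some,
      extendZero_none, extendZero_some_none, kroneckerMap_apply, one_apply, Option.elim_some,
      Option.elim_none, Fintype.card_fin, Pi.one_apply, smul_eq_mul]
  all_goals (try split_ifs) <;> field_simp <;> ring

theorem isIdempotentElem_mubProj : IsIdempotentElem (mubProj d) := by
  rw [IsIdempotentElem, mubProj, extendZero_mul_extendZero, ← mul_kronecker_mul, one_mul,
    isIdempotentElem_centeringMatrix.eq]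

theorem mubProj_mulVec_mubVec : mubProj d *ᵥ mubVec d = 0 := by
  refine extendZero_mulVec_eq_zero ?_
  have hv : mubVec d ∘ some = (d : ℝ)⁻¹ • 1 := by ext; simp [mubVec]
  rw [hv, mulVec_smul, kronecker_mulVec_one, centeringMatrix_mulVec_one]
  ext; simp

theorem trace_mubProj : (mubProj d).trace = (d + 1) * (d - 1) := by
  rw [mubProj, trace_extendZero, trace_kronecker, trace_one, trace_centeringMatrix]
  simp

end Mub

/-- the MUB certificate `T₁` is positive semidefinite of rank `d²`. -/
theorem stmt16 (d : ℕ) (hd : 2 ≤ d) :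
    (mubCert d).PosSemidef ∧ (mubCert d).rank = d ^ 2 := by
  have : NeZero d := ⟨by omega⟩
  have hP := isIdempotentElem_mubProj d
  have hPu := mubProj_mulVec_mubVec d
  rw [mubCert_eq_vecMulVec_add_smul]
  constructor
  · have hP_herm : (mubProj d).IsHermitian := by
      rw [IsHermitian, conjTranspose_eq_transpose_of_trivial, transpose_mubProj]
    simpa using (posSemidef_vecMulVec_self_star (mubVec d)).add
      ((hP_herm.posSemidef_of_isIdempotentElem hP).smul (inv_nonneg.mpr (Nat.cast_nonneg d)))
  · have huP : mubVec d ᵥ* mubProj d = 0 := by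
      rw [← mulVec_transpose, transpose_mubProj, hPu]
    have h := rank_vecMulVec_add_smul hP hPu huP (mubVec_dotProduct_self_ne_zero d)
      (inv_ne_zero (Nat.cast_ne_zero.mpr (NeZero.ne d)))
    rw [trace_mubProj] at h
    exact_mod_cast h.trans (by ring : ((d : ℝ) + 1) * (d - 1) + 1 = (d : ℝ) ^ 2)
end

section
/- Let N ∈ ℕ, let H be a complex Hilbert space, and let |α⟩ ∈ H be vectors indexed by words α ∈ [N]^* such that the Gram matrix M defined by M_{α,β} = ⟨α|β⟩ satisfies M_{α,β} = M_{γ,δ} whenever (α,β) ∼ (γ,δ). For each x ∈ [N], let P_x ∈ B(H) be the orthogonal projection onto the closure of the span of {|xα⟩ : α ∈ [N]^*} (where xα denotes concatenation). Then P_x |α⟩ = |xα⟩ for every α ∈ [N]^*. -/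
/-- `η(α)`: first collapse consecutive equal letters (`a₁^{r₁}⋯a_n^{r_n} ↦ a₁⋯a_n`); if the
first and last letters of the result agree, drop the last letter (and `η(0) = 0`). -/
def wordEta {N : ℕ} (w : Word N) : Word N :=
  let c := w.destutter (· ≠ ·)
  if c.head? = c.getLast? then c.dropLast else c

/-- `(α,β) ∼ (γ,δ)` iff `η(α†β)` is a cyclic rotation of `η(γ†δ)`,
where `α†` is the reversal of `α`. -/
def wordSim {N : ℕ} (α β γ δ : Word N) : Prop :=
  List.IsRotated (wordEta (α.reverse ++ β)) (wordEta (γ.reverse ++ δ))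

namespace List

variable {α : Type*}

theorem destutter'_append_cons_cons (R : α → α → Prop) [DecidableRel R] {x : α} (hx : ¬R x x)
    (l r : List α) (b : α) :
    (l ++ x :: x :: r).destutter' R b = (l ++ x :: r).destutter' R b := by
  induction l generalizing b with
  | nil =>
    by_cases h : R b x
    · simp only [nil_append, destutter'_cons_pos _ h, destutter'_cons_neg _ hx]
    · simp only [nil_append, destutter'_cons_neg _ h]
  | cons a l ih =>
    by_cases h : R b a
    · simp only [cons_append, destutter'_cons_pos _ h, ih]
    · simp only [cons_append, destutter'_cons_neg _ h, ih]

theorem destutter_ne_append_cons_cons [DecidableEq α] (x : α) (l r : List α) :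
    (l ++ x :: x :: r).destutter (· ≠ ·) = (l ++ x :: r).destutter (· ≠ ·) := by
  cases l with
  | nil =>
    simp only [nil_append, destutter_cons',
      destutter'_cons_neg (R := (· ≠ ·)) _ (not_not_intro rfl)]
  | cons a l =>
    simp only [cons_append, destutter_cons',
      destutter'_append_cons_cons (· ≠ ·) (not_not_intro rfl) l r a]

end List

theorem wordEta_reverse_cons_append_cons {N : ℕ} (x : Fin N) (α β : Word N) :
    wordEta ((x :: α).reverse ++ x :: β) = wordEta (α.reverse ++ x :: β) := by
  simp only [wordEta, List.reverse_cons, List.append_assoc, List.singleton_append,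
    List.destutter_ne_append_cons_cons]

theorem wordSim_cons_cons {N : ℕ} (x : Fin N) (α β : Word N) :
    wordSim α (x :: β) (x :: α) (x :: β) := by
  rw [wordSim, wordEta_reverse_cons_append_cons]

namespace Submodule

variable {𝕜 E : Type*} [RCLike 𝕜] [NormedAddCommGroup E] [InnerProductSpace 𝕜 E]
  [CompleteSpace E]

theorem starProjection_closure_span_eq_of_inner_eq_zero {S : Set E} {u v : E}
    (hv : v ∈ (span 𝕜 S).topologicalClosure) (huv : ∀ s ∈ S, inner 𝕜 (u - v) s = 0) :
    (span 𝕜 S).topologicalClosure.starProjection u = v := by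
  refine eq_starProjection_of_mem_orthogonal hv ?_
  have hortho : span 𝕜 {u - v} ⟂ span 𝕜 S :=
    isOrtho_span.2 fun w hw s hs => (Set.mem_singleton_iff.1 hw) ▸ huv s hs
  rw [orthogonal_closure]
  exact isOrtho_iff_le.1 hortho (mem_span_singleton_self _)

end Submodule

/-- key step in the proof of Theorem `thm: Synchronous NPA hierarchy`:
if the Gram matrix `M_{α,β} = ⟨α|β⟩` of a family of vectors `|α⟩ ∈ H` indexed by words is
invariant under `∼`, and `P_x` is the orthogonal projection onto the closure of the span of
`{|xα⟩ : α ∈ [N]^*}`, then `P_x|α⟩ = |xα⟩` for every word `α`. -/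
theorem stmt19 (N : ℕ) (H : Type) [NormedAddCommGroup H] [InnerProductSpace ℂ H]
    [CompleteSpace H] (v : Word N → H)
    (hsim : ∀ α β γ δ : Word N, wordSim α β γ δ →
      (inner ℂ (v α) (v β) : ℂ) = inner ℂ (v γ) (v δ))
    (P : Fin N → H →L[ℂ] H)
    (hP : ∀ (x : Fin N) (h : H), P x h =
      (Submodule.orthogonalProjectionOnto
        (Submodule.span ℂ (Set.range fun α : Word N => v (x :: α))).topologicalClosure h : H)) :
    ∀ (x : Fin N) (α : Word N), P x (v α) = v (x :: α) := by
  intro x α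
  rw [hP, ← Submodule.starProjection_apply]
  refine Submodule.starProjection_closure_span_eq_of_inner_eq_zero
    (Submodule.le_topologicalClosure _ (Submodule.subset_span ⟨α, rfl⟩)) ?_
  rintro _ ⟨β, rfl⟩
  have hgram : inner ℂ (v α) (v (x :: β)) = inner ℂ (v (x :: α)) (v (x :: β)) :=
    hsim _ _ _ _ (wordSim_cons_cons x α β)
  rw [inner_sub_left, hgram, sub_self]
end
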